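/- (Minimum-energy steering value.) Let t0 < t1, let Â : [t0,t1] → ℝ^{n×n} and B̂ : [t0,t1] → ℝ^{n×m} be continuous, and let Φ : [t0,t1] → ℝ^{n×n} be differentiable with Φ(t0) = I, Φ'(τ) = Â(τ)Φ(τ), and Φ(τ) invertible for all τ. Define the controllability Gramian Γ := ∫_{t0}^{t1} Φ(t1)Φ(τ)⁻¹ B̂(τ) B̂(τ)ᵀ (Φ(t1)Φ(τ)⁻¹)ᵀ dτ and assume Γ is positive definite. Then for all x, y ∈ ℝⁿ, the infimum of ∫_{t0}^{t1} (1/2)|v(τ)|² dτ over all continuously differentiable z : [t0,t1] → ℝⁿ and continuous v : [t0,t1] → ℝᵐ with z'(τ) = Â(τ)z(τ) + B̂(τ)v(τ), z(t0) = x, z(t1) = y, equals (1/2)( Φ(t1)x − y )ᵀ Γ⁻¹ ( Φ(t1)x − y ), and the infimum is attained. -/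

import Mathlib

/-!
By variation of constants and uniqueness for linear ODEs, every admissible pair satisfies
`z t1 = Φ t1 x + ∫ G v` with `G τ = Φ t1 (Φ τ)⁻¹ B τ`, so the steering constraint is the linear
condition `∫ G v = η := y - Φ t1 x` on the control alone. For such `v` the pairing `∫ v ⬝ u`
with `u := Gᵀ Γ⁻¹ η` equals `(∫ G v) ⬝ Γ⁻¹ η = η ⬝ Γ⁻¹ η`, independently of `v`, and `u` is itself
admissible because `∫ G Gᵀ = Γ`. Completing the square,
`∫ v ⬝ v ≥ 2 ∫ v ⬝ u - ∫ u ⬝ u = η ⬝ Γ⁻¹ η`, with equality at `v = u`.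
-/

open MeasureTheory Matrix Set

attribute [local instance] Matrix.normedAddCommGroup Matrix.normedSpace

variable {X ι κ ν : Type*} [TopologicalSpace X]

theorem ContinuousOn.matrix_mul [Fintype κ] {M : X → Matrix ι κ ℝ} {N : X → Matrix κ ν ℝ}
    {s : Set X} (hM : ContinuousOn M s) (hN : ContinuousOn N s) :
    ContinuousOn (fun t => M t * N t) s :=
  (continuous_fst.matrix_mul continuous_snd).comp_continuousOn (hM.prodMk hN)

theorem ContinuousOn.matrix_mulVec [Fintype κ] {M : X → Matrix ι κ ℝ} {v : X → κ → ℝ} {s : Set X}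
    (hM : ContinuousOn M s) (hv : ContinuousOn v s) : ContinuousOn (fun t => M t *ᵥ v t) s :=
  (continuous_fst.matrix_mulVec continuous_snd).comp_continuousOn (hM.prodMk hv)

theorem ContinuousOn.dotProduct [Fintype ι] {v w : X → ι → ℝ} {s : Set X}
    (hv : ContinuousOn v s) (hw : ContinuousOn w s) : ContinuousOn (fun t => v t ⬝ᵥ w t) s :=
  (continuous_fst.dotProduct continuous_snd).comp_continuousOn (hv.prodMk hw)

theorem ContinuousOn.matrix_inv [Fintype ι] [DecidableEq ι] {M : X → Matrix ι ι ℝ} {s : Set X}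
    (hM : ContinuousOn M s) (hunit : ∀ t ∈ s, IsUnit (M t)) :
    ContinuousOn (fun t => (M t)⁻¹) s := by
  intro t ht
  refine (continuousAt_matrix_inv _ ?_).comp_continuousWithinAt (hM t ht)
  rw [Ring.inverse_eq_inv']
  exact continuousAt_inv₀ ((isUnit_iff_isUnit_det _).1 (hunit t ht)).ne_zero

theorem HasDerivWithinAt.matrix_mulVec [Fintype κ] {M : ℝ → Matrix ι κ ℝ} {M' : Matrix ι κ ℝ}
    {v : ℝ → κ → ℝ} {v' : κ → ℝ} {s : Set ℝ} {t : ℝ}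
    (hM : HasDerivWithinAt M M' s t) (hv : HasDerivWithinAt v v' s t) :
    HasDerivWithinAt (fun t => M t *ᵥ v t) (M' *ᵥ v t + M t *ᵥ v') s t := by
  refine hasDerivWithinAt_pi.2 fun i => ?_
  have : HasDerivWithinAt (fun t => ∑ j, M t i j * v t j)
      (∑ j, (M' i j * v t j + M t i j * v' j)) s t :=
    HasDerivWithinAt.fun_sum fun j _ =>
      (hasDerivWithinAt_pi.1 (hasDerivWithinAt_pi.1 hM i) j).mul (hasDerivWithinAt_pi.1 hv j)
  simpa [mulVec, dotProduct, Finset.sum_add_distrib] using this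

theorem Matrix.norm_mulVec_le_card_mul [Fintype ι] [Fintype κ] (M : Matrix ι κ ℝ) (v : κ → ℝ) :
    ‖M *ᵥ v‖ ≤ Fintype.card κ * ‖M‖ * ‖v‖ := by
  refine (pi_norm_le_iff_of_nonneg (by positivity)).2 fun i => ?_
  calc ‖(M *ᵥ v) i‖ = |∑ j, M i j * v j| := rfl
    _ ≤ ∑ j, |M i j| * |v j| := by
      simpa only [abs_mul] using Finset.abs_sum_le_sum_abs (fun j => M i j * v j) Finset.univ
    _ ≤ ∑ _j : κ, ‖M‖ * ‖v‖ := Finset.sum_le_sum fun j _ =>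
      mul_le_mul M.norm_entry_le_entrywise_sup_norm (norm_le_pi_norm v j) (abs_nonneg _)
        (norm_nonneg _)
    _ = Fintype.card κ * ‖M‖ * ‖v‖ := by simp [mul_assoc]

theorem eqOn_Icc_of_hasDerivWithinAt_linear [Fintype ι] {A : ℝ → Matrix ι ι ℝ}
    {r z w : ℝ → ι → ℝ} {a b : ℝ} (hA : ContinuousOn A (Icc a b))
    (hz : ∀ t ∈ Icc a b, HasDerivWithinAt z (A t *ᵥ z t + r t) (Icc a b) t)
    (hw : ∀ t ∈ Icc a b, HasDerivWithinAt w (A t *ᵥ w t + r t) (Icc a b) t)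
    (ha : z a = w a) : EqOn z w (Icc a b) := by
  obtain ⟨C, hC⟩ := isCompact_Icc.exists_bound_of_continuousOn hA
  have hlip : ∀ t ∈ Ico a b, LipschitzOnWith (Real.toNNReal (Fintype.card ι * C))
      (fun u => A t *ᵥ u + r t) univ := by
    intro t ht
    refine (LipschitzWith.of_dist_le_mul fun u₁ u₂ => ?_).lipschitzOnWith
    rw [dist_eq_norm, dist_eq_norm, add_sub_add_right_eq_sub, ← mulVec_sub]
    calc ‖A t *ᵥ (u₁ - u₂)‖ ≤ Fintype.card ι * ‖A t‖ * ‖u₁ - u₂‖ := norm_mulVec_le_card_mul _ _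
      _ ≤ Real.toNNReal (Fintype.card ι * C) * ‖u₁ - u₂‖ := by
        gcongr
        exact (mul_le_mul_of_nonneg_left (hC t (Ico_subset_Icc_self ht)) (by positivity)).trans
          (Real.le_coe_toNNReal _)
  have right_deriv {f : ℝ → ι → ℝ}
      (hf : ∀ t ∈ Icc a b, HasDerivWithinAt f (A t *ᵥ f t + r t) (Icc a b) t) :
      ∀ t ∈ Ico a b, HasDerivWithinAt f (A t *ᵥ f t + r t) (Ici t) t := fun t ht =>
    (hf t (Ico_subset_Icc_self ht)).mono_of_mem_nhdsWithin (Icc_mem_nhdsGE_of_mem ht)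
  exact ODE_solution_unique_of_mem_Icc_right hlip (fun t ht => (hz t ht).continuousWithinAt)
    (right_deriv hz) (fun _ _ => trivial) (fun t ht => (hw t ht).continuousWithinAt)
    (right_deriv hw) (fun _ _ => trivial) ha

theorem ContinuousOn.hasDerivWithinAt_intervalIntegral_Icc {E : Type*} [NormedAddCommGroup E]
    [NormedSpace ℝ E] [CompleteSpace E] {f : ℝ → E} {a b t : ℝ} (hf : ContinuousOn f (Icc a b))
    (ht : t ∈ Icc a b) : HasDerivWithinAt (fun u => ∫ s in a..u, f s) (f t) (Icc a b) t :=
  haveI : Fact (t ∈ Icc a b) := ⟨ht⟩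
  intervalIntegral.integral_hasDerivWithinAt_right
    ((hf.mono (Icc_subset_Icc_right ht.2)).intervalIntegrable_of_Icc ht.1)
    (hf.stronglyMeasurableAtFilter_nhdsWithin measurableSet_Icc t)
    (hf t ht)

theorem LinearMap.intervalIntegral_comp_comm {E F : Type*} [NormedAddCommGroup E]
    [NormedSpace ℝ E] [FiniteDimensional ℝ E] [NormedAddCommGroup F] [NormedSpace ℝ F]
    [FiniteDimensional ℝ F] (L : E →ₗ[ℝ] F) {f : ℝ → E} {a b : ℝ}
    (hf : IntervalIntegrable f volume a b) :
    ∫ x in a..b, L (f x) = L (∫ x in a..b, f x) :=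
  haveI := FiniteDimensional.complete ℝ E
  haveI := FiniteDimensional.complete ℝ F
  L.toContinuousLinearMap.intervalIntegral_comp_comm hf

theorem Matrix.intervalIntegral_mulVec [Fintype ι] [Fintype κ] (M : Matrix ι κ ℝ)
    {v : ℝ → κ → ℝ} {a b : ℝ} (hab : a ≤ b) (hv : ContinuousOn v (Icc a b)) :
    ∫ t in a..b, M *ᵥ v t = M *ᵥ ∫ t in a..b, v t :=
  M.mulVecLin.intervalIntegral_comp_comm (hv.intervalIntegrable_of_Icc hab)

-- Continuity rather than `IntervalIntegrable`: the latter does not elaborate for matrices here,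
-- the topology of the sup-norm instance not being reducibly that of `Matrix`.
theorem Matrix.intervalIntegral_mulVec_const [Fintype ι] [Fintype κ] {M : ℝ → Matrix ι κ ℝ}
    {a b : ℝ} (hab : a ≤ b) (hM : ContinuousOn M (Icc a b)) (v : κ → ℝ) :
    ∫ t in a..b, M t *ᵥ v = (∫ t in a..b, M t) *ᵥ v :=
  ((mulVecBilin ℝ ℝ).flip v).intervalIntegral_comp_comm (hM.intervalIntegrable_of_Icc hab)

theorem Matrix.intervalIntegral_dotProduct_const [Fintype ι] {v : ℝ → ι → ℝ} {a b : ℝ}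
    (hab : a ≤ b) (hv : ContinuousOn v (Icc a b)) (w : ι → ℝ) :
    ∫ t in a..b, v t ⬝ᵥ w = (∫ t in a..b, v t) ⬝ᵥ w :=
  ((dotProductBilin ℝ ℝ).flip w).intervalIntegral_comp_comm (hv.intervalIntegrable_of_Icc hab)

theorem two_mul_intervalIntegral_dotProduct_sub_le [Fintype ι] {v u : ℝ → ι → ℝ} {a b : ℝ}
    (hab : a ≤ b) (hv : ContinuousOn v (Icc a b)) (hu : ContinuousOn u (Icc a b)) :
    2 * (∫ t in a..b, v t ⬝ᵥ u t) - ∫ t in a..b, u t ⬝ᵥ u t ≤ ∫ t in a..b, v t ⬝ᵥ v t := by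
  have hvu : IntervalIntegrable (fun t => v t ⬝ᵥ u t) volume a b :=
    (hv.dotProduct hu).intervalIntegrable_of_Icc hab
  have huu : IntervalIntegrable (fun t => u t ⬝ᵥ u t) volume a b :=
    (hu.dotProduct hu).intervalIntegrable_of_Icc hab
  rw [← intervalIntegral.integral_const_mul,
    ← intervalIntegral.integral_sub (hvu.const_mul 2) huu]
  refine intervalIntegral.integral_mono_on hab ((hvu.const_mul 2).sub huu)
    ((hv.dotProduct hv).intervalIntegrable_of_Icc hab) fun t _ => ?_
  have hsq : 0 ≤ (v t - u t) ⬝ᵥ (v t - u t) := Finset.sum_nonneg fun i _ => mul_self_nonneg _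
  rw [sub_dotProduct, dotProduct_sub, dotProduct_sub, dotProduct_comm (u t) (v t)] at hsq
  linarith

theorem intervalIntegral_dotProduct_transpose_mulVec [Fintype ι] [Fintype κ]
    {G : ℝ → Matrix ι κ ℝ} {v : ℝ → κ → ℝ} {a b : ℝ} (hab : a ≤ b)
    (hG : ContinuousOn G (Icc a b)) (hv : ContinuousOn v (Icc a b)) (c : ι → ℝ) :
    ∫ t in a..b, v t ⬝ᵥ ((G t)ᵀ *ᵥ c) = (∫ t in a..b, G t *ᵥ v t) ⬝ᵥ c := by
  simp only [dotProduct_mulVec, vecMul_transpose]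
  exact intervalIntegral_dotProduct_const hab (hG.matrix_mulVec hv) c

theorem intervalIntegral_mulVec_transpose_mulVec [Fintype ι] [Fintype κ]
    {G : ℝ → Matrix ι κ ℝ} {a b : ℝ} (hab : a ≤ b) (hG : ContinuousOn G (Icc a b))
    (c : ι → ℝ) :
    ∫ t in a..b, G t *ᵥ ((G t)ᵀ *ᵥ c) = (∫ t in a..b, G t * (G t)ᵀ) *ᵥ c := by
  simp only [mulVec_mulVec]
  exact intervalIntegral_mulVec_const hab
    (hG.matrix_mul (continuous_id.matrix_transpose.comp_continuousOn hG)) c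

theorem isLeast_intervalIntegral_dotProduct_self_of_gramian [Fintype ι] [DecidableEq ι]
    [Fintype κ] {G : ℝ → Matrix ι κ ℝ} {Γ : Matrix ι ι ℝ} {a b : ℝ} (hab : a ≤ b)
    (hG : ContinuousOn G (Icc a b)) (hΓG : Γ = ∫ t in a..b, G t * (G t)ᵀ) (hΓ : IsUnit Γ)
    (η : ι → ℝ) :
    IsLeast ((fun v => ∫ t in a..b, v t ⬝ᵥ v t) ''
        {v | ContinuousOn v (Icc a b) ∧ ∫ t in a..b, G t *ᵥ v t = η})
      (η ⬝ᵥ Γ⁻¹ *ᵥ η) := by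
  set u : ℝ → κ → ℝ := fun t => (G t)ᵀ *ᵥ (Γ⁻¹ *ᵥ η)
  have hu : ContinuousOn u (Icc a b) :=
    (continuous_id.matrix_transpose.comp_continuousOn hG).matrix_mulVec continuousOn_const
  have hGu : ∫ t in a..b, G t *ᵥ u t = η := by
    rw [intervalIntegral_mulVec_transpose_mulVec hab hG, ← hΓG, mulVec_mulVec,
      mul_nonsing_inv _ ((isUnit_iff_isUnit_det _).1 hΓ), one_mulVec]
  have hpair : ∀ v, ContinuousOn v (Icc a b) → ∫ t in a..b, G t *ᵥ v t = η →
      ∫ t in a..b, v t ⬝ᵥ u t = η ⬝ᵥ Γ⁻¹ *ᵥ η := fun v hv hGv => by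
    rw [intervalIntegral_dotProduct_transpose_mulVec hab hG hv, hGv]
  refine ⟨⟨u, ⟨hu, hGu⟩, hpair u hu hGu⟩, ?_⟩
  rintro _ ⟨v, ⟨hv, hGv⟩, rfl⟩
  have hsq := two_mul_intervalIntegral_dotProduct_sub_le hab hv hu
  rw [hpair v hv hGv, hpair u hu hGu] at hsq
  linarith

section VariationOfConstants

variable [Fintype ι] [DecidableEq ι] [Fintype κ] {A Φ : ℝ → Matrix ι ι ℝ}
  {B : ℝ → Matrix ι κ ℝ} {v : ℝ → κ → ℝ} {t0 t1 : ℝ}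

noncomputable def variationOfConstants (Φ : ℝ → Matrix ι ι ℝ) (B : ℝ → Matrix ι κ ℝ)
    (v : ℝ → κ → ℝ) (t0 : ℝ) (x : ι → ℝ) (t : ℝ) : ι → ℝ :=
  Φ t *ᵥ (x + ∫ s in t0..t, (Φ s)⁻¹ *ᵥ (B s *ᵥ v s))

theorem variationOfConstants_apply_left (hΦ0 : Φ t0 = 1) (x : ι → ℝ) :
    variationOfConstants Φ B v t0 x t0 = x := by
  simp [variationOfConstants, hΦ0]

theorem continuousOn_variationOfConstants_integrand (hΦ : ContinuousOn Φ (Icc t0 t1))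
    (hΦinv : ∀ τ ∈ Icc t0 t1, IsUnit (Φ τ)) (hB : ContinuousOn B (Icc t0 t1))
    (hv : ContinuousOn v (Icc t0 t1)) :
    ContinuousOn (fun s => (Φ s)⁻¹ *ᵥ (B s *ᵥ v s)) (Icc t0 t1) :=
  (hΦ.matrix_inv hΦinv).matrix_mulVec (hB.matrix_mulVec hv)

theorem variationOfConstants_apply (hΦ : ContinuousOn Φ (Icc t0 t1))
    (hΦinv : ∀ τ ∈ Icc t0 t1, IsUnit (Φ τ)) (hB : ContinuousOn B (Icc t0 t1))
    (hv : ContinuousOn v (Icc t0 t1)) (x : ι → ℝ) {t : ℝ} (ht : t ∈ Icc t0 t1) :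
    variationOfConstants Φ B v t0 x t =
      Φ t *ᵥ x + ∫ s in t0..t, (Φ t * (Φ s)⁻¹ * B s) *ᵥ v s := by
  rw [variationOfConstants, mulVec_add, ← intervalIntegral_mulVec _ ht.1
    ((continuousOn_variationOfConstants_integrand hΦ hΦinv hB hv).mono
      (Icc_subset_Icc_right ht.2))]
  simp only [mulVec_mulVec, Matrix.mul_assoc]

theorem hasDerivWithinAt_variationOfConstants
    (hΦ : ∀ τ ∈ Icc t0 t1, HasDerivWithinAt Φ (A τ * Φ τ) (Icc t0 t1) τ)
    (hΦinv : ∀ τ ∈ Icc t0 t1, IsUnit (Φ τ)) (hB : ContinuousOn B (Icc t0 t1))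
    (hv : ContinuousOn v (Icc t0 t1)) (x : ι → ℝ) {τ : ℝ} (hτ : τ ∈ Icc t0 t1) :
    HasDerivWithinAt (variationOfConstants Φ B v t0 x)
      (A τ *ᵥ variationOfConstants Φ B v t0 x τ + B τ *ᵥ v τ) (Icc t0 t1) τ := by
  have hp := continuousOn_variationOfConstants_integrand
    (fun τ hτ => (hΦ τ hτ).continuousWithinAt) hΦinv hB hv
  refine ((hΦ τ hτ).matrix_mulVec ((hasDerivWithinAt_const τ _ x).fun_add
    (hp.hasDerivWithinAt_intervalIntegral_Icc hτ))).congr_deriv ?_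
  rw [zero_add, mulVec_mulVec, mul_nonsing_inv _ ((isUnit_iff_isUnit_det _).1 (hΦinv τ hτ)),
    one_mulVec, variationOfConstants, mulVec_mulVec]

theorem eq_variationOfConstants_of_hasDerivWithinAt (hA : ContinuousOn A (Icc t0 t1))
    (hΦ0 : Φ t0 = 1) (hΦ : ∀ τ ∈ Icc t0 t1, HasDerivWithinAt Φ (A τ * Φ τ) (Icc t0 t1) τ)
    (hΦinv : ∀ τ ∈ Icc t0 t1, IsUnit (Φ τ)) (hB : ContinuousOn B (Icc t0 t1))
    (hv : ContinuousOn v (Icc t0 t1)) {z : ℝ → ι → ℝ}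
    (hz : ∀ τ ∈ Icc t0 t1, HasDerivWithinAt z (A τ *ᵥ z τ + B τ *ᵥ v τ) (Icc t0 t1) τ)
    {t : ℝ} (ht : t ∈ Icc t0 t1) :
    z t = Φ t *ᵥ z t0 + ∫ s in t0..t, (Φ t * (Φ s)⁻¹ * B s) *ᵥ v s := by
  rw [eqOn_Icc_of_hasDerivWithinAt_linear hA hz
    (fun τ hτ => hasDerivWithinAt_variationOfConstants hΦ hΦinv hB hv (z t0) hτ)
    (variationOfConstants_apply_left hΦ0 _).symm ht]
  exact variationOfConstants_apply (fun τ hτ => (hΦ τ hτ).continuousWithinAt) hΦinv hB hv _ ht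

end VariationOfConstants

/-- Minimum-energy steering value: for the controllable linear time-varying system
`z' = Âz + B̂v`, the least value of `∫ (1/2)|v|²` over admissible pairs steering `x`
at `t0` to `y` at `t1` is `(1/2)(Φ(t1)x − y)ᵀΓ⁻¹(Φ(t1)x − y)`, where `Γ` is the
controllability Gramian; the infimum is attained. -/
theorem stmt_16 (n m : ℕ) (t0 t1 : ℝ) (h : t0 < t1)
    (Ahat : ℝ → Matrix (Fin n) (Fin n) ℝ) (B : ℝ → Matrix (Fin n) (Fin m) ℝ)
    (hA : ContinuousOn Ahat (Set.Icc t0 t1)) (hB : ContinuousOn B (Set.Icc t0 t1))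
    (Φ : ℝ → Matrix (Fin n) (Fin n) ℝ) (hΦ0 : Φ t0 = 1)
    (hΦ : ∀ τ ∈ Set.Icc t0 t1,
      HasDerivWithinAt Φ (Ahat τ * Φ τ) (Set.Icc t0 t1) τ)
    (hΦinv : ∀ τ ∈ Set.Icc t0 t1, IsUnit (Φ τ))
    (Γ : Matrix (Fin n) (Fin n) ℝ)
    (hΓdef : Γ = ∫ τ in t0..t1,
      (Φ t1 * (Φ τ)⁻¹) * B τ * (B τ)ᵀ * (Φ t1 * (Φ τ)⁻¹)ᵀ)
    (hΓ : Γ.PosDef) (x y : Fin n → ℝ) :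
    IsLeast {E : ℝ | ∃ (z : ℝ → Fin n → ℝ) (v : ℝ → Fin m → ℝ),
        ContinuousOn v (Set.Icc t0 t1) ∧
        (∀ τ ∈ Set.Icc t0 t1,
          HasDerivWithinAt z (Ahat τ *ᵥ z τ + B τ *ᵥ v τ) (Set.Icc t0 t1) τ) ∧
        z t0 = x ∧ z t1 = y ∧
        E = ∫ τ in t0..t1, (1/2) * (v τ ⬝ᵥ v τ)}
      ((1/2) * ((Φ t1 *ᵥ x - y) ⬝ᵥ Γ⁻¹ *ᵥ (Φ t1 *ᵥ x - y))) := by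
  set G : ℝ → Matrix (Fin n) (Fin m) ℝ := fun τ => Φ t1 * (Φ τ)⁻¹ * B τ
  have hG : ContinuousOn G (Icc t0 t1) := (continuousOn_const.matrix_mul
    (ContinuousOn.matrix_inv (fun τ hτ => (hΦ τ hτ).continuousWithinAt) hΦinv)).matrix_mul hB
  obtain ⟨⟨u, ⟨hu, hGu⟩, hu_energy⟩, hlower⟩ :=
    isLeast_intervalIntegral_dotProduct_self_of_gramian h.le hG
      (by simp only [hΓdef, G, transpose_mul, Matrix.mul_assoc]) hΓ.isUnit (y - Φ t1 *ᵥ x)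
  have hreach : ∀ z v, ContinuousOn v (Icc t0 t1) →
      (∀ τ ∈ Icc t0 t1, HasDerivWithinAt z (Ahat τ *ᵥ z τ + B τ *ᵥ v τ) (Icc t0 t1) τ) →
      z t0 = x → (z t1 = y ↔ ∫ τ in t0..t1, G τ *ᵥ v τ = y - Φ t1 *ᵥ x) :=
    fun z v hv hz hz0 => by
      rw [eq_variationOfConstants_of_hasDerivWithinAt hA hΦ0 hΦ hΦinv hB hv hz
        ⟨h.le, le_rfl⟩, hz0, eq_sub_iff_add_eq']
  have hsol := fun τ (hτ : τ ∈ Icc t0 t1) =>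
    hasDerivWithinAt_variationOfConstants hΦ hΦinv hB hu x hτ
  have hsol0 := variationOfConstants_apply_left (B := B) (v := u) hΦ0 x
  rw [← neg_sub y, mulVec_neg, neg_dotProduct_neg]
  refine ⟨⟨_, u, hu, hsol, hsol0, (hreach _ u hu hsol hsol0).2 hGu,
    by rw [intervalIntegral.integral_const_mul, ← hu_energy]⟩, ?_⟩
  rintro E ⟨z, v, hv, hz, hz0, hz1, rfl⟩
  rw [intervalIntegral.integral_const_mul]
  gcongr
  exact hlower ⟨v, ⟨hv, (hreach z v hv hz hz0).1 hz1⟩, rfl⟩
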